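/- Let P : Herm(n) → ℝ be a coherent prevision, let Π : Herm(n) → Herm(n) be an ℝ-linear map with Π∘Π = Π such that Π(A) is PSD whenever A is PSD, and assume P(Π(1)) > 0, where 1 is the identity matrix. Let D_P := {A ∈ Herm(n) : P(A) > 0}, B_Π := {A : ∃K with Π(K) = 0 and Π(A) − K PD}, and D' := B_Π ∪ {A : Π(A) ∈ D_P}. Then for every A ∈ Herm(n): inf{α ∈ ℝ : α·1 − A ∈ D'} = P(Π(A))/P(Π(1)) = sup{α ∈ ℝ : A − α·1 ∈ D'}. -/
import Mathlib


open scoped Pointwise ComplexOrder Matrix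

/-- The real vector space of n×n complex Hermitian matrices. -/
abbrev Herm (n : ℕ) : Type := selfAdjoint (Matrix (Fin n) (Fin n) ℂ)

/-- The smallest eigenvalue of a Hermitian matrix. -/
noncomputable def lamMin {n : ℕ} (A : Herm n) : ℝ :=
  ⨅ i, (Matrix.IsHermitian.eigenvalues
    (A.prop : Matrix.IsHermitian (A : Matrix (Fin n) (Fin n) ℂ))) i

/-- The identity matrix, as an element of `Herm n`. -/
noncomputable def hermOne (n : ℕ) : Herm n := ⟨1, IsSelfAdjoint.one _⟩

/-- A coherent set of desirable measurements (D1–D5). -/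
def Coherent {n : ℕ} (D : Set (Herm n)) : Prop :=
  (∀ A ∈ D, ¬ Matrix.PosSemidef ((-A : Herm n) : Matrix (Fin n) (Fin n) ℂ)) ∧
  (∀ A : Herm n, Matrix.PosDef (A : Matrix (Fin n) (Fin n) ℂ) → A ∈ D) ∧
  (∀ A B : Herm n, A ∈ D →
    Matrix.PosSemidef ((B - A : Herm n) : Matrix (Fin n) (Fin n) ℂ) → B ∈ D) ∧
  (∀ A B : Herm n, A ∈ D → B ∈ D → A + B ∈ D) ∧
  (∀ A : Herm n, ∀ c : ℝ, A ∈ D → 0 < c → c • A ∈ D)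

/-- All finite positive linear combinations of elements of `S`. -/
def posi {n : ℕ} (S : Set (Herm n)) : Set (Herm n) :=
  {A | ∃ r : ℕ, 0 < r ∧ ∃ (c : Fin r → ℝ) (B : Fin r → Herm n),
    (∀ k, 0 < c k) ∧ (∀ k, B k ∈ S) ∧ A = ∑ k, c k • B k}

/-- A density operator: a Hermitian positive semidefinite matrix with trace 1. -/
def IsDensity {n : ℕ} (ρ : Matrix (Fin n) (Fin n) ℂ) : Prop :=
  ρ.IsHermitian ∧ ρ.PosSemidef ∧ ρ.trace = 1

/-- The updated background cone `B_T` of a linear projection `T`. -/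
def BPi {n : ℕ} (T : Herm n →ₗ[ℝ] Herm n) : Set (Herm n) :=
  {A | ∃ K : Herm n, T K = 0 ∧
    Matrix.PosDef ((T A - K : Herm n) : Matrix (Fin n) (Fin n) ℂ)}

lemma lamMin_nonneg {n : ℕ} {A : Herm n}
    (h : Matrix.PosSemidef (A : Matrix (Fin n) (Fin n) ℂ)) : 0 ≤ lamMin A :=
  Real.iInf_nonneg fun i => h.eigenvalues_nonneg i

/-- Updating the set of desirable measurements `D_P` of a coherent prevision `P` with the
indifference assessment of a PSD-preserving linear projection `T` yields the updated
coherent prevision `A ↦ P (T A) / P (T 1)`: it is both the infimum selling price and the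
supremum buying price determined by the updated set `D' = B_T ∪ {A : T A ∈ D_P}`. -/
theorem updated_prevision (n : ℕ) (hn : 1 ≤ n) (P : Herm n →ₗ[ℝ] ℝ)
    (hP : ∀ A : Herm n, lamMin A ≤ P A)
    (T : Herm n →ₗ[ℝ] Herm n)
    (hproj : ∀ A : Herm n, T (T A) = T A)
    (hpos : ∀ A : Herm n, Matrix.PosSemidef (A : Matrix (Fin n) (Fin n) ℂ) →
      Matrix.PosSemidef ((T A : Herm n) : Matrix (Fin n) (Fin n) ℂ))
    (hone : 0 < P (T (hermOne n))) :
    ∀ A : Herm n,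
      sInf {α : ℝ | α • hermOne n - A ∈ BPi T ∪ {B : Herm n | 0 < P (T B)}}
          = P (T A) / P (T (hermOne n)) ∧
      P (T A) / P (T (hermOne n))
          = sSup {α : ℝ | A - α • hermOne n ∈ BPi T ∪ {B : Herm n | 0 < P (T B)}} := by
  intro A
  set c : ℝ := P (T (hermOne n)) with hc
  set q : ℝ := P (T A) / c with hq
  -- key computations
  have key1 : ∀ α : ℝ, P (T (α • hermOne n - A)) = α * c - P (T A) := by
    intro α
    rw [map_sub, map_smul, map_sub, map_smul, smul_eq_mul]
  have key2 : ∀ α : ℝ, P (T (A - α • hermOne n)) = P (T A) - α * c := by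
    intro α
    rw [map_sub, map_smul, map_sub, map_smul, smul_eq_mul]
  -- a general fact: if X ∈ B_T ∪ D_P then 0 ≤ P (T X)
  have hgen : ∀ X : Herm n, X ∈ BPi T ∪ {B : Herm n | 0 < P (T B)} → 0 ≤ P (T X) := by
    intro X hX
    rcases hX with h | h
    · obtain ⟨K, hK0, hPD⟩ := h
      have hpsd := hpos _ hPD.posSemidef
      have heq : T (T X - K) = T X := by
        rw [map_sub, hK0, hproj, sub_zero]
      rw [heq] at hpsd
      exact le_trans (lamMin_nonneg hpsd) (hP _)
    · exact le_of_lt h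
  -- membership lemmas
  have hmem1 : ∀ α : ℝ, q < α →
      α ∈ {α : ℝ | α • hermOne n - A ∈ BPi T ∪ {B : Herm n | 0 < P (T B)}} := by
    intro α hα
    right
    show 0 < P (T (α • hermOne n - A))
    rw [key1]
    have : P (T A) < α * c := (div_lt_iff₀ hone).mp hα
    linarith
  have hub1 : ∀ α ∈ {α : ℝ | α • hermOne n - A ∈ BPi T ∪ {B : Herm n | 0 < P (T B)}},
      q ≤ α := by
    intro α hα
    have := hgen _ hα
    rw [key1] at this
    rw [hq, div_le_iff₀ hone]
    linarith
  have hmem2 : ∀ α : ℝ, α < q →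
      α ∈ {α : ℝ | A - α • hermOne n ∈ BPi T ∪ {B : Herm n | 0 < P (T B)}} := by
    intro α hα
    right
    show 0 < P (T (A - α • hermOne n))
    rw [key2]
    have : α * c < P (T A) := (lt_div_iff₀ hone).mp hα
    linarith
  have hub2 : ∀ α ∈ {α : ℝ | A - α • hermOne n ∈ BPi T ∪ {B : Herm n | 0 < P (T B)}},
      α ≤ q := by
    intro α hα
    have := hgen _ hα
    rw [key2] at this
    rw [hq, le_div_iff₀ hone]
    linarith
  constructor
  · apply le_antisymm
    · apply le_of_forall_pos_le_add
      intro ε hε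
      exact csInf_le ⟨q, hub1⟩ (hmem1 (q + ε) (by linarith))
    · exact le_csInf ⟨q + 1, hmem1 (q + 1) (by linarith)⟩ hub1
  · apply le_antisymm
    · apply le_of_forall_pos_le_add
      intro ε hε
      have h1 : q - ε ≤ sSup {α : ℝ | A - α • hermOne n ∈ BPi T ∪ {B : Herm n | 0 < P (T B)}} :=
        le_csSup ⟨q, hub2⟩ (hmem2 (q - ε) (by linarith))
      linarith
    · exact csSup_le ⟨q - 1, hmem2 (q - 1) (by linarith)⟩ hub2
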